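/- Provided f ∈ H¹(0,T; 𝓗), any solution u of D_w D_h u = −f satisfies, for all t ∈ (0,T), ℰ[u](t) + ∫₀ᵗ ( ℰ[u](τ) + k[u](τ) ) dτ ≤ ĉ₂ ( ℰ[u](0) + ∫₀ᵗ ( ‖f(τ)‖² + ‖f_t(τ)‖² ) dτ ) for some sufficiently large constant ĉ₂ > 0. -/

import Mathlib

/-!
With `w = D_h u`, the equation `D_w w = -f` is the strongly damped wave equation
`w_tt + b𝒜w_t + c²𝒜w = -f`, its time derivative is the same equation for `w_t` with forcing
`-f_t`, and each `∂ₜᵏu` solves the heat equation `∂ₜv + a𝒜v = ∂ₜᵏw`. Testing these equations,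
`E_w(v, v_t) = ½(‖𝒜^{1/2}v_t‖² + c²‖𝒜v‖²)` dissipates `b‖𝒜v_t‖²` for `v = w, w_t`, the cross term
`⟪w_t, 𝒜w⟫` dissipates `c²‖𝒜w‖²`, and `E₂[u]` dissipates the `u`-part of `k[u]`, each up to errors
controlled by the others. A weighted sum `L` of these is comparable to `ℰ[u]` and satisfies
`L' ≤ -D + C(‖f‖² + ‖f_t‖²)`, where the dissipation `D` bounds `ℰ[u] + k[u]` up to `‖f_t‖²`;
integrating over `(0, t)` gives the estimate.
-/

open MeasureTheory
open scoped RealInnerProductSpace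

/-- `E₁[w](t) = ½(‖𝒜^{1/2}w_tt‖² + ‖𝒜^{1/2}w_t‖² + ‖𝒜w‖²)`. -/
noncomputable def E1 {H : Type*} [NormedAddCommGroup H] [InnerProductSpace ℝ H]
    (A Ahalf : H →L[ℝ] H) (w : ℝ → H) (t : ℝ) : ℝ :=
  (1/2) * (‖Ahalf (iteratedDeriv 2 w t)‖^2 + ‖Ahalf (deriv w t)‖^2 + ‖A (w t)‖^2)

/-- `E₂[u](t) = ½(‖𝒜^{1/2}u_ttt‖² + ‖𝒜u_tt‖² + ‖𝒜^{3/2}u_t‖² + ‖𝒜^{3/2}u‖²)`. -/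
noncomputable def E2 {H : Type*} [NormedAddCommGroup H] [InnerProductSpace ℝ H]
    (A Ahalf : H →L[ℝ] H) (u : ℝ → H) (t : ℝ) : ℝ :=
  (1/2) * (‖Ahalf (iteratedDeriv 3 u t)‖^2 + ‖A (iteratedDeriv 2 u t)‖^2
    + ‖Ahalf (A (deriv u t))‖^2 + ‖Ahalf (A (u t))‖^2)

/-- `ℰ[u](t) = E₁[D_h u](t) + E₂[u](t)` with `D_h = ∂_t + a𝒜`. -/
noncomputable def calE {H : Type*} [NormedAddCommGroup H] [InnerProductSpace ℝ H]
    (A Ahalf : H →L[ℝ] H) (a : ℝ) (u : ℝ → H) (t : ℝ) : ℝ :=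
  E1 A Ahalf (fun τ => deriv u τ + a • A (u τ)) t + E2 A Ahalf u t

/-- `k[u](t) = ‖u_tttt‖² + ‖𝒜u_ttt‖² + ‖𝒜^{3/2}u_tt‖² + ‖𝒜²u_t‖² + ‖𝒜²u‖²`. -/
noncomputable def kE {H : Type*} [NormedAddCommGroup H] [InnerProductSpace ℝ H]
    (A Ahalf : H →L[ℝ] H) (u : ℝ → H) (t : ℝ) : ℝ :=
  ‖iteratedDeriv 4 u t‖^2 + ‖A (iteratedDeriv 3 u t)‖^2
    + ‖Ahalf (A (iteratedDeriv 2 u t))‖^2 + ‖A (A (deriv u t))‖^2 + ‖A (A (u t))‖^2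

open Filter Set Topology

lemma mul_le_young {x y η : ℝ} (hη : 0 < η) : x * y ≤ η / 2 * x ^ 2 + y ^ 2 / (2 * η) := by
  have key : η / 2 * x ^ 2 + y ^ 2 / (2 * η) - x * y = (η * x - y) ^ 2 / (2 * η) := by
    field_simp; ring
  have : 0 ≤ (η * x - y) ^ 2 / (2 * η) := by positivity
  linarith

lemma sq_le_sq_mul_of_le_mul {E F : Type*} [SeminormedAddCommGroup E] [SeminormedAddCommGroup F]
    {x : E} {y : F} {C : ℝ} (h : ‖x‖ ≤ C * ‖y‖) : ‖x‖ ^ 2 ≤ C ^ 2 * ‖y‖ ^ 2 := by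
  rw [← mul_pow]; exact pow_le_pow_left₀ (norm_nonneg x) h 2

lemma norm_add₃_sq_le {E : Type*} [SeminormedAddCommGroup E] (x y z : E) :
    ‖x + y + z‖ ^ 2 ≤ 3 * (‖x‖ ^ 2 + ‖y‖ ^ 2 + ‖z‖ ^ 2) := by
  nlinarith [norm_add₃_le (a := x) (b := y) (c := z), norm_nonneg (x + y + z),
    sq_nonneg (‖x‖ - ‖y‖), sq_nonneg (‖y‖ - ‖z‖), sq_nonneg (‖x‖ - ‖z‖)]

lemma norm_sq_le_of_add_smul {E : Type*} [SeminormedAddCommGroup E] [NormedSpace ℝ E]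
    (x y : E) (a : ℝ) : ‖x‖ ^ 2 ≤ 2 * (‖x + a • y‖ ^ 2 + a ^ 2 * ‖y‖ ^ 2) := by
  have h : ‖x‖ ≤ ‖x + a • y‖ + |a| * ‖y‖ := by
    simpa [norm_smul] using norm_sub_le (x + a • y) (a • y)
  calc ‖x‖ ^ 2 ≤ (‖x + a • y‖ + |a| * ‖y‖) ^ 2 := pow_le_pow_left₀ (norm_nonneg x) h 2
    _ ≤ 2 * (‖x + a • y‖ ^ 2 + (|a| * ‖y‖) ^ 2) := add_sq_le
    _ = 2 * (‖x + a • y‖ ^ 2 + a ^ 2 * ‖y‖ ^ 2) := by rw [mul_pow, sq_abs]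

lemma add_integral_le_of_lyapunov {E L G φ : ℝ → ℝ} {t β C : ℝ} (ht : 0 ≤ t)
    (hL : ContinuousOn L (Icc 0 t))
    (hrate : ∀ s ∈ Ioo 0 t, ∃ d, HasDerivAt L d s ∧ d ≤ -G s + C * φ s)
    (hG : IntegrableOn G (Ioc 0 t)) (hφ : IntegrableOn φ (Ioc 0 t)) (hEL : E t ≤ L t)
    (hL₀ : L 0 ≤ β * E 0) (hβ : 0 ≤ β) (hC : 0 ≤ C) (hE₀ : 0 ≤ E 0)
    (hφ₀ : 0 ≤ ∫ s in Ioc 0 t, φ s) :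
    E t + ∫ s in Ioc 0 t, G s ≤ (β + C) * (E 0 + ∫ s in Ioc 0 t, φ s) := by
  choose! L' hL' hle using hrate
  have hint := intervalIntegral.sub_le_integral_of_hasDeriv_right_of_le
    (φ := fun s => -G s + C * φ s) ht hL (fun s hs => (hL' s hs).hasDerivWithinAt)
    ((integrableOn_Icc_iff_integrableOn_Ioc enorm_ne_top).2 (hG.neg.add (hφ.const_mul C))) hle
  have hsplit : ∫ s in Ioc 0 t, (-G s + C * φ s)
      = -(∫ s in Ioc 0 t, G s) + C * ∫ s in Ioc 0 t, φ s := by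
    rw [integral_add (f := fun s => -G s) hG.neg (hφ.const_mul C), integral_neg,
      integral_const_mul]
  rw [intervalIntegral.integral_of_le ht, hsplit] at hint
  linarith [mul_nonneg hβ hφ₀, mul_nonneg hC hE₀]

/-- Weights of the Lyapunov functional `M (E_w(w, w_t) + E_w(w_t, w_tt)) + ε ⟪w_t, 𝒜w⟫ + θ E₂[u]`
(`lyapunov`). `θ`, `ε`, `M` are fixed in this order, each large enough that the quantity it
dissipates absorbs the errors of the pieces fixed before it; the `energy_*` bounds make the
functional dominate `ℰ[u]`. -/
structure LyapunovWeights (a b c Cp : ℝ) where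
  M : ℝ
  ε : ℝ
  θ : ℝ
  one_le_θ : 1 ≤ θ
  ε_nonneg : 0 ≤ ε
  absorb_heat : 1 ≤ θ * (a / 2)
  absorb_w : θ / (2 * a) + 1 ≤ ε * (c ^ 2 / 2)
  absorb_w₁ : θ * (1 + 3 * c ^ 4) / (2 * a) + ε * (Cp ^ 2 + b ^ 2 / c ^ 2) + 1 ≤ M * (b / 2)
  absorb_w₂ : θ * (Cp ^ 2 + 3 * b ^ 2) / (2 * a) + 1 ≤ M * (b / 2)
  energy_w₁ : 1 + ε * Cp ^ 2 ≤ M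
  energy_w : 1 + ε ≤ M * c ^ 2

namespace LyapunovWeights

variable {a b c Cp : ℝ}

lemma nonempty (ha : 0 < a) (hb : 0 < b) (hc : 0 < c) : Nonempty (LyapunovWeights a b c Cp) := by
  set θ := 1 + 2 / a
  obtain ⟨ε, hε₀, hε⟩ : ∃ ε : ℝ, 0 ≤ ε ∧ θ / (2 * a) + 1 ≤ ε * (c ^ 2 / 2) :=
    ((eventually_ge_atTop 0).and
      ((tendsto_id.atTop_mul_const (by positivity)).eventually_ge_atTop _)).exists
  obtain ⟨M, hM₁, hM₂, hM₃, hM₄⟩ : ∃ M : ℝ,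
      θ * (1 + 3 * c ^ 4) / (2 * a) + ε * (Cp ^ 2 + b ^ 2 / c ^ 2) + 1 ≤ M * (b / 2) ∧
      θ * (Cp ^ 2 + 3 * b ^ 2) / (2 * a) + 1 ≤ M * (b / 2) ∧
      1 + ε * Cp ^ 2 ≤ M ∧ 1 + ε ≤ M * c ^ 2 :=
    (((tendsto_id.atTop_mul_const (by positivity)).eventually_ge_atTop _).and
      (((tendsto_id.atTop_mul_const (by positivity)).eventually_ge_atTop _).and
      ((tendsto_id.eventually_ge_atTop _).and
      ((tendsto_id.atTop_mul_const (by positivity)).eventually_ge_atTop _)))).exists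
  have hθ : 1 ≤ θ := by linarith [div_pos two_pos ha]
  have hθa : 1 ≤ θ * (a / 2) := by simp only [θ]; field_simp; linarith
  exact ⟨⟨M, ε, θ, hθ, hε₀, hθa, hε, hM₁, hM₂, hM₃, hM₄⟩⟩

variable (W : LyapunovWeights a b c Cp)

lemma M_nonneg : 0 ≤ W.M := by nlinarith [W.energy_w₁, W.ε_nonneg, sq_nonneg Cp]

lemma θ_nonneg : 0 ≤ W.θ := zero_le_one.trans W.one_le_θ

noncomputable def forcing : ℝ := W.M / (2 * b) + W.ε / c ^ 2 + 3 * W.θ / (2 * a)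

lemma forcing_nonneg (ha : 0 < a) (hb : 0 < b) : 0 ≤ W.forcing := by
  have := W.M_nonneg; have := W.ε_nonneg; have := W.θ_nonneg
  unfold forcing; positivity

end LyapunovWeights

section Hilbert

variable {H : Type*} [NormedAddCommGroup H] [InnerProductSpace ℝ H] {A Ahalf : H →L[ℝ] H}
  {u : ℝ → H}

lemma real_inner_le_young (x y : H) {η : ℝ} (hη : 0 < η) :
    ⟪x, y⟫ ≤ η / 2 * ‖x‖ ^ 2 + ‖y‖ ^ 2 / (2 * η) :=
  (real_inner_le_norm x y).trans (mul_le_young hη)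

lemma real_inner_le_of_add_smul_eq {x p z : H} {a : ℝ} (ha : 0 < a) (h : x + a • p = z) :
    ⟪x, p⟫ ≤ ‖z‖ ^ 2 / (2 * a) - a / 2 * ‖p‖ ^ 2 := by
  obtain rfl : x = z - a • p := eq_sub_of_add_eq h
  rw [inner_sub_left, real_inner_smul_left, real_inner_self_eq_norm_sq]
  linarith [real_inner_le_young p z ha, real_inner_comm p z]

lemma real_inner_map_left_of_form (hA : ∀ x y, ⟪Ahalf x, Ahalf y⟫ = ⟪x, A y⟫) (x y : H) :
    ⟪A x, y⟫ = ⟪Ahalf x, Ahalf y⟫ := by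
  rw [real_inner_comm, ← hA, real_inner_comm]

lemma norm_map_le_opNorm_mul_of_form (hA : ∀ x y, ⟪Ahalf x, Ahalf y⟫ = ⟪x, A y⟫) (x : H) :
    ‖A x‖ ≤ ‖Ahalf‖ * ‖Ahalf x‖ := by
  rcases (norm_nonneg (A x)).eq_or_lt with h0 | hpos
  · rw [← h0]; positivity
  have h : ‖A x‖ * ‖A x‖ ≤ ‖A x‖ * (‖Ahalf‖ * ‖Ahalf x‖) := calc
    ‖A x‖ * ‖A x‖ = ⟪Ahalf (A x), Ahalf x⟫ := by rw [hA, real_inner_self_eq_norm_mul_norm]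
    _ ≤ ‖Ahalf (A x)‖ * ‖Ahalf x‖ := real_inner_le_norm _ _
    _ ≤ ‖Ahalf‖ * ‖A x‖ * ‖Ahalf x‖ := by gcongr; exact Ahalf.le_opNorm _
    _ = ‖A x‖ * (‖Ahalf‖ * ‖Ahalf x‖) := by ring
  exact le_of_mul_le_mul_left h hpos

lemma abs_real_inner_le_of_poincare {Cp : ℝ} (hP₀ : ∀ x, ‖x‖ ≤ Cp * ‖Ahalf x‖) (x y : H) :
    |⟪x, y⟫| ≤ (Cp ^ 2 * ‖Ahalf x‖ ^ 2 + ‖y‖ ^ 2) / 2 := by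
  have := sq_le_sq_mul_of_le_mul (hP₀ x)
  nlinarith [abs_real_inner_le_norm x y, sq_nonneg (‖x‖ - ‖y‖)]

lemma wave_energy_rate_le (hA : ∀ x y, ⟪Ahalf x, Ahalf y⟫ = ⟪x, A y⟫) {b c : ℝ} (hb : 0 < b)
    {v v₁ v₂ g : H} (h : v₂ + b • A v₁ + c ^ 2 • A v = -g) :
    ⟪Ahalf v₁, Ahalf v₂⟫ + c ^ 2 * ⟪A v, A v₁⟫ ≤ -(b / 2) * ‖A v₁‖ ^ 2 + ‖g‖ ^ 2 / (2 * b) := by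
  rw [real_inner_comm, hA]
  obtain rfl : v₂ = -g - b • A v₁ - c ^ 2 • A v := by linear_combination (norm := module) h
  simp only [inner_sub_left, inner_neg_left, real_inner_smul_left, real_inner_self_eq_norm_sq]
  have := real_inner_le_young (A v₁) (-g) hb
  rw [inner_neg_right, norm_neg, real_inner_comm] at this
  linear_combination this

lemma wave_cross_rate_le (hA : ∀ x y, ⟪Ahalf x, Ahalf y⟫ = ⟪x, A y⟫) {Cp : ℝ}
    (hP : ∀ x, ‖Ahalf x‖ ≤ Cp * ‖A x‖) {b c : ℝ} (hc : 0 < c)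
    {v v₁ v₂ g : H} (h : v₂ + b • A v₁ + c ^ 2 • A v = -g) :
    ⟪v₁, A v₁⟫ + ⟪v₂, A v⟫
      ≤ -(c ^ 2 / 2) * ‖A v‖ ^ 2 + (Cp ^ 2 + b ^ 2 / c ^ 2) * ‖A v₁‖ ^ 2 + ‖g‖ ^ 2 / c ^ 2 := by
  obtain rfl : v₂ = -g - b • A v₁ - c ^ 2 • A v := by linear_combination (norm := module) h
  rw [← hA, real_inner_self_eq_norm_sq]
  simp only [inner_sub_left, inner_neg_left, real_inner_smul_left, real_inner_self_eq_norm_sq]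
  have hc₂ : 2 * (c ^ 2 / 2) = c ^ 2 := by ring
  have hg := real_inner_le_young (A v) (-g) (by positivity : 0 < c ^ 2 / 2)
  have hb := real_inner_le_young (A v) (-(b • A v₁)) (by positivity : 0 < c ^ 2 / 2)
  rw [inner_neg_right, norm_neg, hc₂] at hg
  rw [inner_neg_right, inner_smul_right, norm_neg, norm_smul, mul_pow, Real.norm_eq_abs, sq_abs,
    hc₂] at hb
  rw [real_inner_comm (A v) g, real_inner_comm (A v) (A v₁)]
  linear_combination hg + hb + sq_le_sq_mul_of_le_mul (hP v₁)

lemma norm_sq_le_of_wave_eq {b c : ℝ} {v v₁ v₂ g : H} (h : v₂ + b • A v₁ + c ^ 2 • A v = -g) :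
    ‖v₂‖ ^ 2 ≤ 3 * (b ^ 2 * ‖A v₁‖ ^ 2 + c ^ 4 * ‖A v‖ ^ 2 + ‖g‖ ^ 2) := by
  obtain rfl : v₂ = -(b • A v₁) + -(c ^ 2 • A v) + -g := by
    linear_combination (norm := module) h
  refine (norm_add₃_sq_le _ _ _).trans_eq ?_
  simp only [norm_neg, norm_smul, mul_pow, Real.norm_eq_abs, sq_abs]
  ring

lemma E2_rate_le (hA : ∀ x y, ⟪Ahalf x, Ahalf y⟫ = ⟪x, A y⟫) {a : ℝ} (ha : 0 < a)
    (u₀ u₁ u₂ u₃ u₄ : H) :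
    ⟪Ahalf u₃, Ahalf u₄⟫ + ⟪A u₂, A u₃⟫ + ⟪Ahalf (A u₁), Ahalf (A u₂)⟫
        + ⟪Ahalf (A u₀), Ahalf (A u₁)⟫
      ≤ -(a / 2) * (‖A u₃‖ ^ 2 + ‖Ahalf (A u₂)‖ ^ 2 + ‖A (A u₁)‖ ^ 2 + ‖A (A u₀)‖ ^ 2)
        + (‖u₄ + a • A u₃‖ ^ 2 + ‖Ahalf (u₃ + a • A u₂)‖ ^ 2 + ‖A (u₂ + a • A u₁)‖ ^ 2
          + ‖A (u₁ + a • A u₀)‖ ^ 2) / (2 * a) := by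
  have h₄ := real_inner_le_of_add_smul_eq ha (x := u₄) (p := A u₃) rfl
  have h₃ := real_inner_le_of_add_smul_eq ha (x := Ahalf u₃) (p := Ahalf (A u₂))
    (z := Ahalf (u₃ + a • A u₂)) (by simp)
  have h₂ := real_inner_le_of_add_smul_eq ha (x := A u₂) (p := A (A u₁))
    (z := A (u₂ + a • A u₁)) (by simp)
  have h₁ := real_inner_le_of_add_smul_eq ha (x := A u₁) (p := A (A u₀))
    (z := A (u₁ + a • A u₀)) (by simp)
  linear_combination h₄ + h₃ + h₂ + h₁ + (real_inner_comm _ _).trans (hA u₄ u₃)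
    + (real_inner_comm _ _).trans (real_inner_map_left_of_form hA u₃ (A u₂))
    + (real_inner_comm _ _).trans (hA (A u₂) (A u₁))
    + (real_inner_comm _ _).trans (hA (A u₁) (A u₀))

lemma hasDerivAt_iteratedDeriv {n : WithTop ℕ∞} (hu : ContDiff ℝ n u) {k : ℕ}
    (hk : (k : WithTop ℕ∞) < n) (t : ℝ) :
    HasDerivAt (iteratedDeriv k u) (iteratedDeriv (k + 1) u t) t := by
  rw [iteratedDeriv_succ]
  exact (hu.differentiable_iteratedDeriv k hk t).hasDerivAt

lemma HasDerivAt.norm_sq_map (B : H →L[ℝ] H) {v : ℝ → H} {v' : H} {t : ℝ}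
    (hv : HasDerivAt v v' t) : HasDerivAt (fun τ => ‖B (v τ)‖ ^ 2) (2 * ⟪B (v t), B v'⟫) t :=
  (B.hasFDerivAt.comp_hasDerivAt t hv).norm_sq

/-- `∂ₜᵏ w` for `w = D_h u`. -/
noncomputable def iteratedDerivDh (A : H →L[ℝ] H) (a : ℝ) (u : ℝ → H) (k : ℕ) (t : ℝ) : H :=
  iteratedDeriv (k + 1) u t + a • A (iteratedDeriv k u t)

lemma hasDerivAt_iteratedDerivDh (a : ℝ) {n : WithTop ℕ∞} (hu : ContDiff ℝ n u) {k : ℕ}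
    (hk : ((k + 1 : ℕ) : WithTop ℕ∞) < n) (t : ℝ) :
    HasDerivAt (iteratedDerivDh A a u k) (iteratedDerivDh A a u (k + 1) t) t :=
  have hk' : (k : WithTop ℕ∞) < n :=
    (by exact_mod_cast k.lt_succ_self : (k : WithTop ℕ∞) < _).trans hk
  (hasDerivAt_iteratedDeriv hu hk t).add
    ((A.hasFDerivAt.comp_hasDerivAt t (hasDerivAt_iteratedDeriv hu hk' t)).const_smul a)

lemma iteratedDeriv_Dh (a : ℝ) {n : WithTop ℕ∞} (hu : ContDiff ℝ n u) {k : ℕ}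
    (hk : (k : WithTop ℕ∞) < n) :
    iteratedDeriv k (fun τ => deriv u τ + a • A (u τ)) = iteratedDerivDh A a u k := by
  induction k with
  | zero => ext t; simp [iteratedDerivDh]
  | succ k ih =>
    have hk' : (k : WithTop ℕ∞) < n :=
      (by exact_mod_cast k.lt_succ_self : (k : WithTop ℕ∞) < _).trans hk
    rw [iteratedDeriv_succ, ih hk']
    exact funext fun t => (hasDerivAt_iteratedDerivDh a hu hk t).deriv

lemma wave_eq_of_pde {a b c : ℝ} (hu : ContDiff ℝ 3 u) {t : ℝ} {g : H}
    (h : iteratedDeriv 2 (fun τ => deriv u τ + a • A (u τ)) t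
      + b • A (deriv (fun τ => deriv u τ + a • A (u τ)) t)
      + c ^ 2 • A (deriv u t + a • A (u t)) = -g) :
    iteratedDerivDh A a u 2 t + b • A (iteratedDerivDh A a u 1 t)
      + c ^ 2 • A (iteratedDerivDh A a u 0 t) = -g := by
  have h₁ := iteratedDeriv_Dh (A := A) a hu (k := 1) (by norm_num)
  have h₀ : iteratedDerivDh A a u 0 t = deriv u t + a • A (u t) := by simp [iteratedDerivDh]
  rw [iteratedDeriv_one] at h₁
  rwa [h₁, iteratedDeriv_Dh a hu (by norm_num), ← h₀] at h

lemma wave_eq_deriv {a b c : ℝ} (hu : ContDiff ℝ 4 u) {f : ℝ → H} {f' : H} {t : ℝ}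
    (hf : HasDerivAt f f' t)
    (h : ∀ᶠ τ in 𝓝 t, iteratedDerivDh A a u 2 τ + b • A (iteratedDerivDh A a u 1 τ)
      + c ^ 2 • A (iteratedDerivDh A a u 0 τ) = -f τ) :
    iteratedDerivDh A a u 3 t + b • A (iteratedDerivDh A a u 2 t)
      + c ^ 2 • A (iteratedDerivDh A a u 1 t) = -f' := by
  have dw (k : ℕ) (hk : k + 1 < 4) :=
    hasDerivAt_iteratedDerivDh (A := A) a hu (k := k) (by exact_mod_cast hk) t
  have hlhs := ((dw 2 (by norm_num)).add
    ((A.hasFDerivAt.comp_hasDerivAt t (dw 1 (by norm_num))).const_smul b)).add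
    ((A.hasFDerivAt.comp_hasDerivAt t (dw 0 (by norm_num))).const_smul (c ^ 2))
  exact hlhs.unique (hf.neg.congr_of_eventuallyEq h)

lemma E2_eq_iteratedDeriv (A Ahalf : H →L[ℝ] H) (u : ℝ → H) :
    E2 A Ahalf u = fun t => (1 / 2) * (‖Ahalf (iteratedDeriv 3 u t)‖ ^ 2
      + ‖A (iteratedDeriv 2 u t)‖ ^ 2 + ‖Ahalf (A (iteratedDeriv 1 u t))‖ ^ 2
      + ‖Ahalf (A (iteratedDeriv 0 u t))‖ ^ 2) := by
  ext t; simp [E2]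

lemma E2_nonneg (t : ℝ) : 0 ≤ E2 A Ahalf u t := by unfold E2; positivity

lemma hasDerivAt_E2 (hu : ContDiff ℝ 4 u) (t : ℝ) :
    HasDerivAt (E2 A Ahalf u)
      (⟪Ahalf (iteratedDeriv 3 u t), Ahalf (iteratedDeriv 4 u t)⟫
        + ⟪A (iteratedDeriv 2 u t), A (iteratedDeriv 3 u t)⟫
        + ⟪Ahalf (A (iteratedDeriv 1 u t)), Ahalf (A (iteratedDeriv 2 u t))⟫
        + ⟪Ahalf (A (iteratedDeriv 0 u t)), Ahalf (A (iteratedDeriv 1 u t))⟫) t := by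
  have d (k : ℕ) (hk : k < 4) := hasDerivAt_iteratedDeriv hu (by exact_mod_cast hk) t
  rw [E2_eq_iteratedDeriv]
  refine ((((d 3 (by norm_num)).norm_sq_map Ahalf).add ((d 2 (by norm_num)).norm_sq_map A)).add
    ((d 1 (by norm_num)).norm_sq_map (Ahalf.comp A)) |>.add
    ((d 0 (by norm_num)).norm_sq_map (Ahalf.comp A))).const_mul (1 / 2) |>.congr_deriv ?_
  simp only [ContinuousLinearMap.comp_apply]
  ring

lemma calE_eq {a : ℝ} (hu : ContDiff ℝ 3 u) (t : ℝ) :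
    calE A Ahalf a u t = (1 / 2) * (‖Ahalf (iteratedDerivDh A a u 2 t)‖ ^ 2
      + ‖Ahalf (iteratedDerivDh A a u 1 t)‖ ^ 2 + ‖A (iteratedDerivDh A a u 0 t)‖ ^ 2)
      + E2 A Ahalf u t := by
  have h₁ := iteratedDeriv_Dh (A := A) a hu (k := 1) (by norm_num)
  rw [iteratedDeriv_one] at h₁
  rw [calE, E1, h₁, iteratedDeriv_Dh a hu (by norm_num)]
  simp [iteratedDerivDh]

lemma calE_nonneg {a : ℝ} (hu : ContDiff ℝ 3 u) (t : ℝ) : 0 ≤ calE A Ahalf a u t := by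
  rw [calE_eq hu]; have := E2_nonneg (A := A) (Ahalf := Ahalf) (u := u) t; positivity

noncomputable def waveEnergy (A Ahalf : H →L[ℝ] H) (c : ℝ) (v v' : H) : ℝ :=
  (‖Ahalf v'‖ ^ 2 + c ^ 2 * ‖A v‖ ^ 2) / 2

lemma hasDerivAt_waveEnergy (c : ℝ) {v v' : ℝ → H} {v₁ v₂ : H} {t : ℝ}
    (hv : HasDerivAt v v₁ t) (hv' : HasDerivAt v' v₂ t) :
    HasDerivAt (fun τ => waveEnergy A Ahalf c (v τ) (v' τ))
      (⟪Ahalf (v' t), Ahalf v₂⟫ + c ^ 2 * ⟪A (v t), A v₁⟫) t := by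
  refine (((hv'.norm_sq_map Ahalf).add ((hv.norm_sq_map A).const_mul (c ^ 2))).div_const 2
    ).congr_deriv ?_
  ring

noncomputable def lyapunov (A Ahalf : H →L[ℝ] H) {a b c Cp : ℝ} (W : LyapunovWeights a b c Cp)
    (u : ℝ → H) (t : ℝ) : ℝ :=
  W.M * (waveEnergy A Ahalf c (iteratedDerivDh A a u 0 t) (iteratedDerivDh A a u 1 t)
      + waveEnergy A Ahalf c (iteratedDerivDh A a u 1 t) (iteratedDerivDh A a u 2 t))
    + W.ε * ⟪iteratedDerivDh A a u 1 t, A (iteratedDerivDh A a u 0 t)⟫ + W.θ * E2 A Ahalf u t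

noncomputable def dissipation (A Ahalf : H →L[ℝ] H) (a : ℝ) (u : ℝ → H) (t : ℝ) : ℝ :=
  ‖A (iteratedDerivDh A a u 0 t)‖ ^ 2 + ‖A (iteratedDerivDh A a u 1 t)‖ ^ 2
    + ‖A (iteratedDerivDh A a u 2 t)‖ ^ 2
    + (‖A (iteratedDeriv 3 u t)‖ ^ 2 + ‖Ahalf (A (iteratedDeriv 2 u t))‖ ^ 2
      + ‖A (A (iteratedDeriv 1 u t))‖ ^ 2 + ‖A (A (iteratedDeriv 0 u t))‖ ^ 2)

lemma continuous_lyapunov {a b c Cp : ℝ} (W : LyapunovWeights a b c Cp) (hu : ContDiff ℝ 3 u) :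
    Continuous (lyapunov A Ahalf W u) := by
  have h₀ : Continuous u := hu.continuous
  have h₁ : Continuous (deriv u) := by simpa using hu.continuous_iteratedDeriv 1 (by norm_num)
  have h₂ := hu.continuous_iteratedDeriv 2 (by norm_num)
  have h₃ := hu.continuous_iteratedDeriv 3 (by norm_num)
  unfold lyapunov waveEnergy E2 iteratedDerivDh
  simp only [Nat.reduceAdd, iteratedDeriv_one, iteratedDeriv_zero]
  fun_prop

lemma lyapunov_hasDerivAt_le {a b c Cp : ℝ} (hA : ∀ x y, ⟪Ahalf x, Ahalf y⟫ = ⟪x, A y⟫)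
    (hP : ∀ x, ‖Ahalf x‖ ≤ Cp * ‖A x‖) (ha : 0 < a) (hb : 0 < b) (hc : 0 < c)
    (W : LyapunovWeights a b c Cp) (hu : ContDiff ℝ 4 u) {t : ℝ} {g₀ g₁ : H}
    (h₀ : iteratedDerivDh A a u 2 t + b • A (iteratedDerivDh A a u 1 t)
      + c ^ 2 • A (iteratedDerivDh A a u 0 t) = -g₀)
    (h₁ : iteratedDerivDh A a u 3 t + b • A (iteratedDerivDh A a u 2 t)
      + c ^ 2 • A (iteratedDerivDh A a u 1 t) = -g₁) :
    ∃ d, HasDerivAt (lyapunov A Ahalf W u) d t ∧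
      d ≤ -dissipation A Ahalf a u t + W.forcing * (‖g₀‖ ^ 2 + ‖g₁‖ ^ 2) := by
  have dw (k : ℕ) (hk : k + 1 < 4) :=
    hasDerivAt_iteratedDerivDh (A := A) a hu (k := k) (by exact_mod_cast hk) t
  refine ⟨_, ((((hasDerivAt_waveEnergy c (dw 0 (by norm_num)) (dw 1 (by norm_num))).add
    (hasDerivAt_waveEnergy c (dw 1 (by norm_num)) (dw 2 (by norm_num)))).const_mul W.M).add
    (((dw 1 (by norm_num)).inner ℝ (A.hasFDerivAt.comp_hasDerivAt t (dw 0 (by norm_num))))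
      |>.const_mul W.ε)).add ((hasDerivAt_E2 hu t).const_mul W.θ), ?_⟩
  have hθa : 0 ≤ W.θ / (2 * a) := div_nonneg W.θ_nonneg (by positivity)
  have r₁ := mul_le_mul_of_nonneg_left (wave_energy_rate_le hA hb h₀) W.M_nonneg
  have r₂ := mul_le_mul_of_nonneg_left (wave_energy_rate_le hA hb h₁) W.M_nonneg
  have r₃ := mul_le_mul_of_nonneg_left (wave_cross_rate_le hA hP hc h₀) W.ε_nonneg
  have r₄ := mul_le_mul_of_nonneg_left (E2_rate_le hA ha (iteratedDeriv 0 u t)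
    (iteratedDeriv 1 u t) (iteratedDeriv 2 u t) (iteratedDeriv 3 u t) (iteratedDeriv 4 u t))
    W.θ_nonneg
  have e₃ := mul_le_mul_of_nonneg_left (norm_sq_le_of_wave_eq h₁) hθa
  have e₂ :=
    mul_le_mul_of_nonneg_left (sq_le_sq_mul_of_le_mul (hP (iteratedDerivDh A a u 2 t))) hθa
  have s₀ : 0 ≤ 3 * W.θ / (2 * a) * ‖g₀‖ ^ 2 := by have := W.θ_nonneg; positivity
  have s₁ : 0 ≤ W.ε / c ^ 2 * ‖g₁‖ ^ 2 := by have := W.ε_nonneg; positivity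
  simp only [LyapunovWeights.forcing, dissipation, iteratedDerivDh, Function.comp_apply,
    Nat.reduceAdd] at r₁ r₂ r₃ e₃ e₂ ⊢
  linear_combination r₁ + r₂ + r₃ + r₄ + e₃ + e₂ + s₀ + s₁
    + ‖A (iteratedDeriv 1 u t + a • A (iteratedDeriv 0 u t))‖ ^ 2 * W.absorb_w
    + ‖A (iteratedDeriv 2 u t + a • A (iteratedDeriv 1 u t))‖ ^ 2 * W.absorb_w₁
    + ‖A (iteratedDeriv 3 u t + a • A (iteratedDeriv 2 u t))‖ ^ 2 * W.absorb_w₂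
    + (‖A (iteratedDeriv 3 u t)‖ ^ 2 + ‖Ahalf (A (iteratedDeriv 2 u t))‖ ^ 2
      + ‖A (A (iteratedDeriv 1 u t))‖ ^ 2 + ‖A (A (iteratedDeriv 0 u t))‖ ^ 2) * W.absorb_heat

lemma calE_add_kE_le {a b c Cp : ℝ} (hP : ∀ x, ‖Ahalf x‖ ≤ Cp * ‖A x‖)
    (hP₀ : ∀ x, ‖x‖ ≤ Cp * ‖Ahalf x‖) (hu : ContDiff ℝ 3 u) {t : ℝ} {g₁ : H}
    (h₁ : iteratedDerivDh A a u 3 t + b • A (iteratedDerivDh A a u 2 t)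
      + c ^ 2 • A (iteratedDerivDh A a u 1 t) = -g₁) :
    calE A Ahalf a u t + kE A Ahalf u t
      ≤ (1 + Cp ^ 2 + 6 * b ^ 2 + 6 * c ^ 4 + 2 * a ^ 2) * dissipation A Ahalf a u t
        + 6 * ‖g₁‖ ^ 2 := by
  rw [calE_eq hu, E2, kE]
  simp only [dissipation, iteratedDeriv_one, iteratedDeriv_zero]
  set w := iteratedDerivDh A a u
  set K := 1 + Cp ^ 2 + 6 * b ^ 2 + 6 * c ^ 4 + 2 * a ^ 2
  have hu₄ : ‖iteratedDeriv 4 u t‖ ^ 2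
      ≤ 2 * (‖w 3 t‖ ^ 2 + a ^ 2 * ‖A (iteratedDeriv 3 u t)‖ ^ 2) :=
    norm_sq_le_of_add_smul _ _ a
  have hK (k : ℝ) (hk : k ≤ K) (x : ℝ) := mul_le_mul_of_nonneg_right hk (sq_nonneg x)
  have : 0 ≤ c ^ 4 := by positivity
  have := sq_nonneg Cp
  have := sq_nonneg a
  have := sq_nonneg b
  linarith [norm_sq_le_of_wave_eq h₁,
    hK (1 / 2) (by linarith) ‖A (w 0 t)‖, hK (Cp ^ 2 / 2 + 6 * c ^ 4) (by linarith) ‖A (w 1 t)‖,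
    hK (Cp ^ 2 / 2 + 6 * b ^ 2) (by linarith) ‖A (w 2 t)‖,
    hK (Cp ^ 2 / 2 + 1 + 2 * a ^ 2) (by linarith) ‖A (iteratedDeriv 3 u t)‖,
    hK (Cp ^ 2 / 2 + 1) (by linarith) ‖Ahalf (A (iteratedDeriv 2 u t))‖,
    hK (Cp ^ 2 / 2 + 1) (by linarith) ‖A (A (deriv u t))‖,
    hK (Cp ^ 2 / 2 + 1) (by linarith) ‖A (A (u t))‖,
    sq_le_sq_mul_of_le_mul (hP (w 2 t)), sq_le_sq_mul_of_le_mul (hP (w 1 t)),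
    sq_le_sq_mul_of_le_mul (hP (iteratedDeriv 3 u t)),
    sq_le_sq_mul_of_le_mul (hP₀ (A (iteratedDeriv 2 u t))),
    sq_le_sq_mul_of_le_mul (hP (A (deriv u t))), sq_le_sq_mul_of_le_mul (hP (A (u t)))]

lemma calE_le_lyapunov {a b c Cp : ℝ} (hP₀ : ∀ x, ‖x‖ ≤ Cp * ‖Ahalf x‖)
    (W : LyapunovWeights a b c Cp) (hu : ContDiff ℝ 3 u) (t : ℝ) :
    calE A Ahalf a u t ≤ lyapunov A Ahalf W u t := by
  rw [calE_eq hu, lyapunov, waveEnergy, waveEnergy]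
  set w := iteratedDerivDh A a u
  have hI := neg_le_of_abs_le (abs_real_inner_le_of_poincare hP₀ (w 1 t) (A (w 0 t)))
  have hM : 1 ≤ W.M := by nlinarith [W.energy_w₁, W.ε_nonneg, sq_nonneg Cp]
  nlinarith [mul_le_mul_of_nonneg_left hI W.ε_nonneg,
    mul_le_mul_of_nonneg_right W.energy_w₁ (sq_nonneg ‖Ahalf (w 1 t)‖),
    mul_le_mul_of_nonneg_right W.energy_w (sq_nonneg ‖A (w 0 t)‖),
    mul_le_mul_of_nonneg_right hM (sq_nonneg ‖Ahalf (w 2 t)‖),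
    mul_nonneg W.M_nonneg (mul_nonneg (sq_nonneg c) (sq_nonneg ‖A (w 1 t)‖)),
    mul_le_mul_of_nonneg_right W.one_le_θ (E2_nonneg (A := A) (Ahalf := Ahalf) (u := u) t)]

lemma lyapunov_le {a b c Cp : ℝ} (hA : ∀ x y, ⟪Ahalf x, Ahalf y⟫ = ⟪x, A y⟫)
    (hP₀ : ∀ x, ‖x‖ ≤ Cp * ‖Ahalf x‖) (W : LyapunovWeights a b c Cp) (hu : ContDiff ℝ 3 u)
    (t : ℝ) : lyapunov A Ahalf W u t
      ≤ (W.M * (2 + c ^ 2 + c ^ 2 * ‖Ahalf‖ ^ 2) + W.ε * (Cp ^ 2 + 1) + W.θ)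
        * calE A Ahalf a u t := by
  rw [calE_eq hu, lyapunov, waveEnergy, waveEnergy]
  set w := iteratedDerivDh A a u
  set S := ‖Ahalf (w 2 t)‖ ^ 2 + ‖Ahalf (w 1 t)‖ ^ 2 + ‖A (w 0 t)‖ ^ 2 with hS
  set κ := W.M * (2 + c ^ 2 + c ^ 2 * ‖Ahalf‖ ^ 2) + W.ε * (Cp ^ 2 + 1)
  have := sq_nonneg ‖Ahalf (w 2 t)‖
  have := sq_nonneg ‖Ahalf (w 1 t)‖
  have := sq_nonneg ‖A (w 0 t)‖
  have hS₂ : ‖Ahalf (w 2 t)‖ ^ 2 ≤ S := by linarith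
  have hS₁ : ‖Ahalf (w 1 t)‖ ^ 2 ≤ S := by linarith
  have hS₀ : ‖A (w 0 t)‖ ^ 2 ≤ S := by linarith
  have hAw : ‖A (w 1 t)‖ ^ 2 ≤ ‖Ahalf‖ ^ 2 * S :=
    (sq_le_sq_mul_of_le_mul (norm_map_le_opNorm_mul_of_form hA (w 1 t))).trans
      (mul_le_mul_of_nonneg_left hS₁ (sq_nonneg _))
  have hwave : W.M * ((‖Ahalf (w 1 t)‖ ^ 2 + c ^ 2 * ‖A (w 0 t)‖ ^ 2) / 2
      + (‖Ahalf (w 2 t)‖ ^ 2 + c ^ 2 * ‖A (w 1 t)‖ ^ 2) / 2)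
      ≤ W.M * (2 + c ^ 2 + c ^ 2 * ‖Ahalf‖ ^ 2) * S / 2 := by
    have := mul_le_mul_of_nonneg_left hS₀ (sq_nonneg c)
    have := mul_le_mul_of_nonneg_left hAw (sq_nonneg c)
    nlinarith [W.M_nonneg]
  have hcross : W.ε * ⟪w 1 t, A (w 0 t)⟫ ≤ W.ε * (Cp ^ 2 + 1) * S / 2 := by
    have hI := le_of_abs_le (abs_real_inner_le_of_poincare hP₀ (w 1 t) (A (w 0 t)))
    have := mul_le_mul_of_nonneg_left hS₁ (sq_nonneg Cp)
    nlinarith [W.ε_nonneg]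
  have hκ : 0 ≤ κ := add_nonneg (mul_nonneg W.M_nonneg (by positivity))
    (mul_nonneg W.ε_nonneg (by positivity))
  nlinarith [mul_nonneg hκ (E2_nonneg (A := A) (Ahalf := Ahalf) (u := u) t),
    mul_nonneg W.θ_nonneg (hS₀.trans' (sq_nonneg _))]

end Hilbert

theorem combined_energy_estimate_general
    {H : Type*} [NormedAddCommGroup H] [InnerProductSpace ℝ H]
    (A Ahalf : H →L[ℝ] H)
    (hAhalfsym : ∀ x y : H, ⟪Ahalf x, y⟫ = ⟪x, Ahalf y⟫)
    (hhalf : ∀ x : H, Ahalf (Ahalf x) = A x)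
    (Cp : ℝ)
    (hPoincare : ∀ x : H, ‖x‖ ≤ Cp * ‖Ahalf x‖)
    (a b c : ℝ) (ha : 0 < a) (hb : 0 < b) (hc : 0 < c) :
    ∃ c2 : ℝ, 0 < c2 ∧
      ∀ T : ℝ, 0 < T → ∀ f u : ℝ → H,
        ContDiff ℝ 1 f → ContDiff ℝ 4 u →
        IntegrableOn (fun τ => ‖f τ‖^2 + ‖deriv f τ‖^2) (Set.Ioc 0 T) →
        IntegrableOn (fun τ => calE A Ahalf a u τ + kE A Ahalf u τ) (Set.Ioc 0 T) →
        (∀ t ∈ Set.Ioo 0 T,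
          iteratedDeriv 2 (fun τ => deriv u τ + a • A (u τ)) t
            + b • A (deriv (fun τ => deriv u τ + a • A (u τ)) t)
            + c^2 • A (deriv u t + a • A (u t)) = - f t) →
        ∀ t ∈ Set.Ioo 0 T,
          calE A Ahalf a u t
              + ∫ τ in Set.Ioc 0 t, (calE A Ahalf a u τ + kE A Ahalf u τ)
            ≤ c2 * (calE A Ahalf a u 0
                + ∫ τ in Set.Ioc 0 t, (‖f τ‖^2 + ‖deriv f τ‖^2)) := by
  have hA : ∀ x y, ⟪Ahalf x, Ahalf y⟫ = ⟪x, A y⟫ := fun x y => by rw [hAhalfsym, hhalf]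
  have hP : ∀ x, ‖Ahalf x‖ ≤ Cp * ‖A x‖ := fun x => by simpa [hhalf] using hPoincare (Ahalf x)
  obtain ⟨W⟩ := LyapunovWeights.nonempty (Cp := Cp) ha hb hc
  set K := 1 + Cp ^ 2 + 6 * b ^ 2 + 6 * c ^ 4 + 2 * a ^ 2
  set β := W.M * (2 + c ^ 2 + c ^ 2 * ‖Ahalf‖ ^ 2) + W.ε * (Cp ^ 2 + 1) + W.θ
  have hK : 1 ≤ K := by nlinarith [sq_nonneg Cp, sq_nonneg a, sq_nonneg b, pow_two_nonneg (c ^ 2)]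
  have hK₀ : 0 ≤ K := zero_le_one.trans hK
  have hβ : 0 ≤ β := by have := W.M_nonneg; have := W.ε_nonneg; have := W.θ_nonneg; positivity
  have hC := W.forcing_nonneg ha hb
  refine ⟨K * β + (K * W.forcing + 6), by positivity, ?_⟩
  intro T _ f u hf hu hIf hIE hPDE t ht
  have hu₃ : ContDiff ℝ 3 u := hu.of_le (by norm_num)
  have hwave := fun s hs => wave_eq_of_pde hu₃ (hPDE s hs)
  refine add_integral_le_of_lyapunov (L := fun τ => K * lyapunov A Ahalf W u τ) ht.1.le
    ((continuous_lyapunov W hu₃).const_mul K).continuousOn (fun s hs => ?_)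
    (hIE.mono_set (Ioc_subset_Ioc_right ht.2.le)) (hIf.mono_set (Ioc_subset_Ioc_right ht.2.le))
    ?_ ?_ (mul_nonneg hK₀ hβ) (by positivity) (calE_nonneg hu₃ 0)
    (setIntegral_nonneg measurableSet_Ioc fun τ _ => by positivity)
  · have hsT : s ∈ Ioo 0 T := ⟨hs.1, hs.2.trans ht.2⟩
    have h₁ := wave_eq_deriv hu (hf.differentiable one_ne_zero s).hasDerivAt
      (eventually_of_mem (isOpen_Ioo.mem_nhds hsT) hwave)
    obtain ⟨d, hd, hdle⟩ := lyapunov_hasDerivAt_le hA hP ha hb hc W hu (hwave s hsT) h₁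
    refine ⟨K * d, hd.const_mul K, ?_⟩
    nlinarith [calE_add_kE_le hP hPoincare hu₃ h₁, mul_le_mul_of_nonneg_left hdle hK₀]
  · nlinarith [calE_le_lyapunov (A := A) hPoincare W hu₃ t,
      calE_nonneg (A := A) (Ahalf := Ahalf) (a := a) hu₃ t]
  · nlinarith [lyapunov_le hA hPoincare W hu₃ 0]

/-- Lemma 3.8: energy estimate for solutions of `D_w D_h u = −f`. -/
theorem combined_energy_estimate
    {H : Type*} [NormedAddCommGroup H] [InnerProductSpace ℝ H] [CompleteSpace H]
    [TopologicalSpace.SeparableSpace H]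
    (A Ahalf : H →L[ℝ] H)
    (hAsym : ∀ x y : H, ⟪A x, y⟫ = ⟪x, A y⟫)
    (hAhalfsym : ∀ x y : H, ⟪Ahalf x, y⟫ = ⟪x, Ahalf y⟫)
    (hhalf : ∀ x : H, Ahalf (Ahalf x) = A x)
    (hspec : spectrum ℝ A ⊆ Set.Ioi (0 : ℝ))
    (heig : ∀ μ ∈ spectrum ℝ A, ∃ x : H, x ≠ 0 ∧ A x = μ • x)
    (Cp : ℝ) (hCp : 0 < Cp)
    (hPoincare : ∀ x : H, ‖x‖ ≤ Cp * ‖Ahalf x‖)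
    (a b c : ℝ) (ha : 0 < a) (hb : 0 < b) (hc : 0 < c) :
    ∃ c2 : ℝ, 0 < c2 ∧
      ∀ T : ℝ, 0 < T → ∀ f u : ℝ → H,
        ContDiff ℝ 1 f → ContDiff ℝ 4 u →
        IntegrableOn (fun τ => ‖f τ‖^2 + ‖deriv f τ‖^2) (Set.Ioc 0 T) →
        IntegrableOn (fun τ => calE A Ahalf a u τ + kE A Ahalf u τ) (Set.Ioc 0 T) →
        (∀ t ∈ Set.Ioo 0 T,
          iteratedDeriv 2 (fun τ => deriv u τ + a • A (u τ)) t
            + b • A (deriv (fun τ => deriv u τ + a • A (u τ)) t)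
            + c^2 • A (deriv u t + a • A (u t)) = - f t) →
        ∀ t ∈ Set.Ioo 0 T,
          calE A Ahalf a u t
              + ∫ τ in Set.Ioc 0 t, (calE A Ahalf a u τ + kE A Ahalf u τ)
            ≤ c2 * (calE A Ahalf a u 0
                + ∫ τ in Set.Ioc 0 t, (‖f τ‖^2 + ‖deriv f τ‖^2)) :=
  combined_energy_estimate_general A Ahalf hAhalfsym hhalf Cp hPoincare a b c ha hb hc
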